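/- arXiv:1610.03232 — 4 statements merged into one kernel-verified Lean document; each statement's English description precedes it below -/
import Mathlib

section
/- Let T > 0, let A : [0,T] → ℝ^{N×N} be continuous, and let r : [0,T] → ℝ^N be continuous. Suppose p, p̃, q : [0,T] → ℝ^N are differentiable and satisfy p′(t) = A(t) p(t), p̃′(t) = A(t) p̃(t) + r(t), and q′(t) = −A(t)ᵀ q(t) with q(T) = z for a given vector z ∈ ℝ^N. Then |zᵀ (p(T) − p̃(T))| ≤ ∫₀ᵀ ‖q(t)‖_∞ ‖r(t)‖_{ℓ¹} dt + ‖q(0)‖_∞ ‖p(0) − p̃(0)‖_{ℓ¹}, where ‖·‖_∞ denotes the maximum-absolute-entry norm and ‖·‖_{ℓ¹} the sum-of-absolute-entries norm on ℝ^N. -/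
/-!
With `e = p̃ - p` one has `e' = A e + r`, so the adjoint equation makes the `A`-terms cancel in
`(q ⬝ᵥ e)' = q ⬝ᵥ r`. The fundamental theorem of calculus then gives
`q(T) ⬝ᵥ e(T) = q(0) ⬝ᵥ e(0) + ∫₀ᵀ q ⬝ᵥ r`, and each pairing is bounded by Hölder's inequality
for the dual norms `ℓ^∞` and `ℓ¹`.
-/

open Matrix Set

section AdjointPairing

variable {ι : Type*} [Fintype ι] {a b : ℝ}

theorem abs_dotProduct_le_norm_mul_sum_abs (v w : ι → ℝ) :
    |v ⬝ᵥ w| ≤ ‖v‖ * ∑ i, |w i| := by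
  rw [Finset.mul_sum]
  refine (Finset.abs_sum_le_sum_abs _ _).trans (Finset.sum_le_sum fun i _ => ?_)
  rw [abs_mul]
  exact mul_le_mul_of_nonneg_right (norm_le_pi_norm v i) (abs_nonneg _)

theorem HasDerivAt.dotProduct {u v : ℝ → ι → ℝ} {u' v' : ι → ℝ} {t : ℝ}
    (hu : HasDerivAt u u' t) (hv : HasDerivAt v v' t) :
    HasDerivAt (fun s => u s ⬝ᵥ v s) (u' ⬝ᵥ v t + u t ⬝ᵥ v') t := by
  simp only [_root_.dotProduct, ← Finset.sum_add_distrib]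
  exact HasDerivAt.fun_sum fun i _ =>
    (hasDerivAt_pi.1 hu i).mul (hasDerivAt_pi.1 hv i)

theorem ContinuousOn.dotProduct {s : Set ℝ} {u v : ℝ → ι → ℝ}
    (hu : ContinuousOn u s) (hv : ContinuousOn v s) :
    ContinuousOn (fun t => u t ⬝ᵥ v t) s :=
  (continuous_fst.dotProduct continuous_snd).comp_continuousOn (hu.prodMk hv)

theorem hasDerivAt_dotProduct_of_adjoint {A : Matrix ι ι ℝ} {q e : ℝ → ι → ℝ} {r : ι → ℝ}
    {t : ℝ} (hq : HasDerivAt q (-(Aᵀ *ᵥ q t)) t) (he : HasDerivAt e (A *ᵥ e t + r) t) :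
    HasDerivAt (fun s => q s ⬝ᵥ e s) (q t ⬝ᵥ r) t := by
  convert hq.dotProduct he using 1
  rw [mulVec_transpose, neg_dotProduct, dotProduct_add, dotProduct_mulVec]
  ring

theorem dotProduct_adjoint_eq_add_integral (hab : a ≤ b) (A : ℝ → Matrix ι ι ℝ)
    {q e r : ℝ → ι → ℝ} (hr : ContinuousOn r (Icc a b))
    (hq : ∀ t ∈ Icc a b, HasDerivAt q (-((A t)ᵀ *ᵥ q t)) t)
    (he : ∀ t ∈ Icc a b, HasDerivAt e (A t *ᵥ e t + r t) t) :
    q b ⬝ᵥ e b = q a ⬝ᵥ e a + ∫ t in a..b, q t ⬝ᵥ r t := by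
  have hqc : ContinuousOn q (Icc a b) := fun t ht => (hq t ht).continuousAt.continuousWithinAt
  rw [intervalIntegral.integral_eq_sub_of_hasDerivAt (f := fun t => q t ⬝ᵥ e t)
    (fun t ht => hasDerivAt_dotProduct_of_adjoint (hq t (uIcc_of_le hab ▸ ht))
      (he t (uIcc_of_le hab ▸ ht)))
    ((hqc.dotProduct hr).intervalIntegrable_of_Icc hab)]
  ring

theorem abs_integral_dotProduct_le (hab : a ≤ b) {q r : ℝ → ι → ℝ}
    (hq : ContinuousOn q (Icc a b)) (hr : ContinuousOn r (Icc a b)) :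
    |∫ t in a..b, q t ⬝ᵥ r t| ≤ ∫ t in a..b, ‖q t‖ * ∑ i, |r t i| := by
  refine (intervalIntegral.abs_integral_le_integral_abs hab).trans
    (intervalIntegral.integral_mono_on hab ?_ ?_ fun t _ => abs_dotProduct_le_norm_mul_sum_abs _ _)
  · exact ((hq.dotProduct hr).intervalIntegrable_of_Icc hab).abs
  · exact (hq.norm.mul (continuousOn_finsetSum _ fun i _ =>
      ((continuous_apply i).comp_continuousOn hr).abs)).intervalIntegrable_of_Icc hab

end AdjointPairing

theorem adjoint_error_estimate_dual_general {N : ℕ} (T : ℝ) (hT : 0 < T)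
    (A : ℝ → Matrix (Fin N) (Fin N) ℝ)
    (r : ℝ → (Fin N → ℝ)) (hr : ContinuousOn r (Set.Icc 0 T))
    (p ptilde q : ℝ → (Fin N → ℝ)) (z : Fin N → ℝ)
    (hp : ∀ t ∈ Set.Icc (0:ℝ) T, HasDerivAt p ((A t) *ᵥ (p t)) t)
    (hptilde : ∀ t ∈ Set.Icc (0:ℝ) T,
      HasDerivAt ptilde ((A t) *ᵥ (ptilde t) + r t) t)
    (hq : ∀ t ∈ Set.Icc (0:ℝ) T, HasDerivAt q (-((A t)ᵀ *ᵥ (q t))) t)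
    (hqT : q T = z) :
    |z ⬝ᵥ (p T - ptilde T)|
      ≤ (∫ t in (0:ℝ)..T, ‖q t‖ * ∑ i, |r t i|)
        + ‖q 0‖ * ∑ i, |p 0 i - ptilde 0 i| := by
  have herr : ∀ t ∈ Icc 0 T,
      HasDerivAt (fun s => ptilde s - p s) (A t *ᵥ (ptilde t - p t) + r t) t :=
    fun t ht => ((hptilde t ht).sub (hp t ht)).congr_deriv (by rw [mulVec_sub]; abel)
  have hqc : ContinuousOn q (Icc 0 T) := fun t ht => (hq t ht).continuousAt.continuousWithinAt
  have hrepr := dotProduct_adjoint_eq_add_integral hT.le A hr hq herr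
  calc |z ⬝ᵥ (p T - ptilde T)| = |q 0 ⬝ᵥ (ptilde 0 - p 0) + ∫ t in (0:ℝ)..T, q t ⬝ᵥ r t| := by
        rw [← hrepr, ← hqT, ← abs_neg, ← dotProduct_neg, neg_sub]
    _ ≤ (∫ t in (0:ℝ)..T, ‖q t‖ * ∑ i, |r t i|) + ‖q 0‖ * ∑ i, |p 0 i - ptilde 0 i| := by
        rw [add_comm]
        refine (abs_add_le _ _).trans (add_le_add (abs_integral_dotProduct_le hT.le hqc hr) ?_)
        simpa only [Pi.sub_apply, abs_sub_comm (ptilde 0 _)] using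
          abs_dotProduct_le_norm_mul_sum_abs (q 0) (ptilde 0 - p 0)

/-- A posteriori error estimate with the dual solution:
`|zᵀ (p(T) − p̃(T))| ≤ ∫₀ᵀ ‖q(t)‖_∞ ‖r(t)‖_{ℓ¹} dt + ‖q(0)‖_∞ ‖p(0) − p̃(0)‖_{ℓ¹}`.
Here `‖·‖` on `Fin N → ℝ` is the sup (max-absolute-entry) norm, and the ℓ¹ norm
is written as the sum of absolute values of the entries. -/
theorem adjoint_error_estimate_dual {N : ℕ} (T : ℝ) (hT : 0 < T)
    (A : ℝ → Matrix (Fin N) (Fin N) ℝ) (hA : ContinuousOn A (Set.Icc 0 T))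
    (r : ℝ → (Fin N → ℝ)) (hr : ContinuousOn r (Set.Icc 0 T))
    (p ptilde q : ℝ → (Fin N → ℝ)) (z : Fin N → ℝ)
    (hp : ∀ t ∈ Set.Icc (0:ℝ) T, HasDerivAt p ((A t) *ᵥ (p t)) t)
    (hptilde : ∀ t ∈ Set.Icc (0:ℝ) T,
      HasDerivAt ptilde ((A t) *ᵥ (ptilde t) + r t) t)
    (hq : ∀ t ∈ Set.Icc (0:ℝ) T, HasDerivAt q (-((A t)ᵀ *ᵥ (q t))) t)
    (hqT : q T = z) :
    |z ⬝ᵥ (p T - ptilde T)|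
      ≤ (∫ t in (0:ℝ)..T, ‖q t‖ * ∑ i, |r t i|)
        + ‖q 0‖ * ∑ i, |p 0 i - ptilde 0 i| :=
  adjoint_error_estimate_dual_general T hT A r hr p ptilde q z hp hptilde hq hqT
end

section
/- Let T > 0 and let A : [0,T] → ℝ^{N×N} be continuous such that for each t, A(t) is a Markov generator, i.e., its off-diagonal entries are nonnegative and each of its columns sums to zero. Let r : [0,T] → ℝ^N be continuous, and suppose p, p̃ : [0,T] → ℝ^N are differentiable with p′(t) = A(t) p(t) and p̃′(t) = A(t) p̃(t) + r(t). If ∫₀ᵀ ‖r(t)‖_{ℓ¹} dt + ‖p(0) − p̃(0)‖_{ℓ¹} ≤ ε for some ε > 0, then for every component index i one has |p_i(T) − p̃_i(T)| ≤ ε; i.e., p̃(T) − ε e ≤ p(T) ≤ p̃(T) + ε e componentwise, where e = (1,…,1). -/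
/-!
Write `q = p̃ - p`, so that `q' = A q + r`. The `ℓ¹` norm `‖q(t)‖₁` is the maximum of the
linear functionals `t ↦ ∑ sᵢ qᵢ(t)` over sign patterns `s`, and for a pattern attaining the
maximum, `∑ sᵢ (A q)ᵢ ≤ 0` because `A` is a Markov generator. Hence the right Dini derivative of
`‖q‖₁` is at most `‖r‖₁`, and integrating gives `‖q(T)‖₁ ≤ ‖q(0)‖₁ + ∫₀ᵀ ‖r‖₁ ≤ ε`, which bounds
every component.
-/

open Matrix Set Filter Topology

theorem SignType.coe_mul_le_abs {α : Type*} [Ring α] [LinearOrder α] [IsStrictOrderedRing α]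
    (s : SignType) (a : α) : s * a ≤ |a| := by
  cases s
  · simp
  · simpa using neg_le_abs a
  · simpa using le_abs_self a

def Matrix.IsMarkovGenerator {ι : Type*} [Fintype ι] (M : Matrix ι ι ℝ) : Prop :=
  (∀ i j, i ≠ j → 0 ≤ M i j) ∧ ∀ j, ∑ i, M i j = 0

theorem Matrix.IsMarkovGenerator.dotProduct_mulVec_nonpos {ι : Type*} [Fintype ι]
    {M : Matrix ι ι ℝ} (hM : M.IsMarkovGenerator) {c q : ι → ℝ} (hc : ∀ i, |c i| ≤ 1)
    (hcq : ∀ i, c i * q i = |q i|) :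
    c ⬝ᵥ (M *ᵥ q) ≤ 0 := by
  have hterm : ∀ i j, c i * (M i j * q j) ≤ M i j * |q j| := by
    intro i j
    rcases eq_or_ne i j with rfl | hij
    · rw [← hcq, mul_left_comm]
    · calc c i * (M i j * q j) = M i j * (c i * q j) := by ring
        _ ≤ M i j * |q j| := by
          refine mul_le_mul_of_nonneg_left ?_ (hM.1 i j hij)
          calc c i * q j ≤ |c i * q j| := le_abs_self _
            _ = |c i| * |q j| := abs_mul _ _
            _ ≤ |q j| := mul_le_of_le_one_left (abs_nonneg _) (hc i)
  calc c ⬝ᵥ (M *ᵥ q) = ∑ j, ∑ i, c i * (M i j * q j) := by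
        simp only [dotProduct, mulVec, Finset.mul_sum]
        exact Finset.sum_comm
    _ ≤ ∑ j, (∑ i, M i j) * |q j| :=
        Finset.sum_le_sum fun j _ => by
          rw [Finset.sum_mul]
          exact Finset.sum_le_sum fun i _ => hterm i j
    _ = 0 := by simp only [hM.2, zero_mul, Finset.sum_const_zero]

theorem eventually_slope_lt_of_forall_le_of_exists_eq {ι : Type*} [Finite ι] {φ : ι → ℝ → ℝ}
    {φ' : ι → ℝ} {f : ℝ → ℝ} {x ρ : ℝ} (hle : ∀ s, φ s x ≤ f x)
    (hmax : ∀ t, ∃ s, φ s t = f t) (hφ : ∀ s, HasDerivAt (φ s) (φ' s) x)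
    (hρ : ∀ s, φ s x = f x → φ' s < ρ) :
    ∀ᶠ z in 𝓝[>] x, slope f x z < ρ := by
  suffices h : ∀ s, ∀ᶠ z in 𝓝[>] x, φ s z < f x + ρ * (z - x) by
    filter_upwards [eventually_all.2 h, self_mem_nhdsWithin] with z hz hzx
    obtain ⟨s, hs⟩ := hmax z
    rw [slope_def_field, div_lt_iff₀ (sub_pos.2 hzx)]
    linarith [hz s]
  intro s
  by_cases hs : φ s x = f x
  · filter_upwards [(hφ s).hasDerivWithinAt.limsup_slope_le' (lt_irrefl x) (hρ s hs),
      self_mem_nhdsWithin] with z hz hzx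
    rw [slope_def_field, div_lt_iff₀ (sub_pos.2 hzx)] at hz
    linarith
  · have hcont : ContinuousAt (fun z => φ s z - ρ * (z - x)) x :=
      (hφ s).continuousAt.sub (by fun_prop)
    have hlt : φ s x - ρ * (x - x) < f x := by
      linarith [lt_of_le_of_ne (hle s) hs]
    filter_upwards [nhdsWithin_le_nhds (hcont.eventually_lt_const hlt)] with z hz
    linarith

theorem le_add_integral_of_eventually_slope_lt {f g : ℝ → ℝ} {a b : ℝ} (hab : a ≤ b)
    (hf : ContinuousOn f (Icc a b)) (hg : ContinuousOn g (Icc a b))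
    (hslope : ∀ x ∈ Ico a b, ∀ ρ, g x < ρ → ∀ᶠ z in 𝓝[>] x, slope f x z < ρ) :
    f b ≤ f a + ∫ x in a..b, g x := by
  -- extend `g` continuously to `ℝ` so that the bound `f a + ∫ₐᵗ g` is differentiable everywhere
  set G : ℝ → ℝ := IccExtend hab ((Icc a b).domRestrict g)
  have hG : Continuous G := hg.domRestrict.Icc_extend'
  have hGg : EqOn G g (Icc a b) := fun x hx => IccExtend_of_mem hab _ hx
  have hB : ∀ x, HasDerivAt (fun t => f a + ∫ s in a..t, G s) (G x) x := fun x =>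
    (hG.integral_hasStrictDerivAt a x).hasDerivAt.const_add (f a)
  have hfB := image_le_of_liminf_slope_right_le_deriv_boundary hf
    (by simp) (fun x _ => (hB x).continuousAt.continuousWithinAt)
    (fun x _ => (hB x).hasDerivWithinAt)
    (fun x hx ρ hρ => (hslope x hx ρ (hGg (Ico_subset_Icc_self hx) ▸ hρ)).frequently)
    (right_mem_Icc.2 hab)
  rwa [intervalIntegral.integral_congr (hGg.mono (uIcc_of_le hab).subset)] at hfB

theorem sum_abs_le_add_integral_of_hasDerivAt {ι : Type*} [Fintype ι]
    {A : ℝ → Matrix ι ι ℝ} {q r : ℝ → ι → ℝ} {a b : ℝ} (hab : a ≤ b)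
    (hA : ∀ t ∈ Icc a b, (A t).IsMarkovGenerator) (hr : ContinuousOn r (Icc a b))
    (hq : ∀ t ∈ Icc a b, HasDerivAt q (A t *ᵥ q t + r t) t) :
    ∑ i, |q b i| ≤ ∑ i, |q a i| + ∫ t in a..b, ∑ i, |r t i| := by
  have hqi : ∀ t ∈ Icc a b, ∀ i, HasDerivAt (q · i) ((A t *ᵥ q t + r t) i) t :=
    fun t ht => hasDerivAt_pi.1 (hq t ht)
  refine le_add_integral_of_eventually_slope_lt (f := fun t => ∑ i, |q t i|) hab
    (continuousOn_finsetSum _ fun i _ t ht => (hqi t ht i).continuousAt.continuousWithinAt.abs)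
    (continuousOn_finsetSum _ fun i _ => ((continuous_apply i).comp_continuousOn hr).abs)
    fun x hx ρ hρ => ?_
  have hxI := Ico_subset_Icc_self hx
  refine eventually_slope_lt_of_forall_le_of_exists_eq
    (φ := fun (s : ι → SignType) t => ∑ i, (s i : ℝ) * q t i)
    (φ' := fun s => ∑ i, (s i : ℝ) * (A x *ᵥ q x + r x) i) ?_ ?_ ?_ ?_
  · exact fun s => Finset.sum_le_sum fun i _ => (s i).coe_mul_le_abs _
  · exact fun t => ⟨fun i => SignType.sign (q t i), by simp only [sign_mul_self]⟩
  · exact fun s => HasDerivAt.fun_sum fun i _ => (hqi x hxI i).const_mul _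
  · intro s hs
    have hsq : ∀ i, (s i : ℝ) * q x i = |q x i| := fun i =>
      (Finset.sum_eq_sum_iff_of_le fun i _ => (s i).coe_mul_le_abs _).1 hs i (Finset.mem_univ i)
    have hAq : (fun i => (s i : ℝ)) ⬝ᵥ (A x *ᵥ q x) ≤ 0 :=
      (hA x hxI).dotProduct_mulVec_nonpos (fun i => by cases s i <;> simp) hsq
    calc ∑ i, (s i : ℝ) * (A x *ᵥ q x + r x) i
        = (fun i => (s i : ℝ)) ⬝ᵥ (A x *ᵥ q x) + ∑ i, (s i : ℝ) * r x i := by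
          simp only [dotProduct, Pi.add_apply, mul_add, Finset.sum_add_distrib]
      _ ≤ 0 + ∑ i, |r x i| :=
          add_le_add hAq (Finset.sum_le_sum fun i _ => (s i).coe_mul_le_abs _)
      _ < ρ := by rwa [zero_add]

theorem componentwise_error_bound_general {N : ℕ} (T : ℝ) (hT : 0 < T)
    (A : ℝ → Matrix (Fin N) (Fin N) ℝ)
    (hMarkov : ∀ t ∈ Set.Icc (0:ℝ) T,
      (∀ i j, i ≠ j → 0 ≤ A t i j) ∧ (∀ j, ∑ i, A t i j = 0))
    (r : ℝ → (Fin N → ℝ)) (hr : ContinuousOn r (Set.Icc 0 T))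
    (p ptilde : ℝ → (Fin N → ℝ))
    (hp : ∀ t ∈ Set.Icc (0:ℝ) T, HasDerivAt p ((A t) *ᵥ (p t)) t)
    (hptilde : ∀ t ∈ Set.Icc (0:ℝ) T,
      HasDerivAt ptilde ((A t) *ᵥ (ptilde t) + r t) t)
    (ε : ℝ)
    (hbound : (∫ t in (0:ℝ)..T, ∑ i, |r t i|) + ∑ i, |p 0 i - ptilde 0 i| ≤ ε) :
    ∀ i, |p T i - ptilde T i| ≤ ε ∧
      ptilde T i - ε ≤ p T i ∧ p T i ≤ ptilde T i + ε := by
  have hq : ∀ t ∈ Icc 0 T, HasDerivAt (ptilde - p) (A t *ᵥ (ptilde - p) t + r t) t := by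
    intro t ht
    have h := (hptilde t ht).sub (hp t ht)
    rwa [add_sub_right_comm, ← mulVec_sub] at h
  have hl1 := sum_abs_le_add_integral_of_hasDerivAt hT.le hMarkov hr hq
  simp only [Pi.sub_apply, abs_sub_comm (ptilde _ _)] at hl1
  intro i
  have hi : |p T i - ptilde T i| ≤ ε :=
    (Finset.single_le_sum (fun j _ => abs_nonneg (p T j - ptilde T j)) (Finset.mem_univ i)).trans
      (by linarith)
  exact ⟨hi, by linarith [(abs_le.1 hi).1], by linarith [(abs_le.1 hi).2]⟩

/-- Component-wise error bound: if
`∫₀ᵀ ‖r(t)‖_{ℓ¹} dt + ‖p(0) − p̃(0)‖_{ℓ¹} ≤ ε`, then every component of the error at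
the final time satisfies `|pᵢ(T) − p̃ᵢ(T)| ≤ ε`, i.e. `p̃(T) − εe ≤ p(T) ≤ p̃(T) + εe`. -/
theorem componentwise_error_bound {N : ℕ} (T : ℝ) (hT : 0 < T)
    (A : ℝ → Matrix (Fin N) (Fin N) ℝ) (hA : ContinuousOn A (Set.Icc 0 T))
    (hMarkov : ∀ t ∈ Set.Icc (0:ℝ) T,
      (∀ i j, i ≠ j → 0 ≤ A t i j) ∧ (∀ j, ∑ i, A t i j = 0))
    (r : ℝ → (Fin N → ℝ)) (hr : ContinuousOn r (Set.Icc 0 T))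
    (p ptilde : ℝ → (Fin N → ℝ))
    (hp : ∀ t ∈ Set.Icc (0:ℝ) T, HasDerivAt p ((A t) *ᵥ (p t)) t)
    (hptilde : ∀ t ∈ Set.Icc (0:ℝ) T,
      HasDerivAt ptilde ((A t) *ᵥ (ptilde t) + r t) t)
    (ε : ℝ) (hε : 0 < ε)
    (hbound : (∫ t in (0:ℝ)..T, ∑ i, |r t i|) + ∑ i, |p 0 i - ptilde 0 i| ≤ ε) :
    ∀ i, |p T i - ptilde T i| ≤ ε ∧
      ptilde T i - ε ≤ p T i ∧ p T i ≤ ptilde T i + ε :=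
  componentwise_error_bound_general T hT A hMarkov r hr p ptilde hp hptilde ε hbound
end

section
/- Let T > 0 and let B : [0,T] → ℝ^{N×N} be continuous such that for each t, B(t) has nonnegative off-diagonal entries and each of its columns has sum ≤ 0 (a truncated, sub-Markovian generator). Suppose q : [0,T] → ℝ^N is differentiable and satisfies q′(t) = −B(t)ᵀ q(t) with terminal condition q(T) = z, where z ≥ 0 componentwise. Then for every t ∈ [0,T], q(t) ≥ 0 componentwise and ‖q(t)‖_∞ ≤ ‖z‖_∞. -/
/-!
The transpose of a truncated generator is a Metzler matrix (nonnegative off-diagonal entries)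
with row sums `≤ 0`. For a backward equation `u' = -(M u + d)` with `M` Metzler with row sums
`≤ K` and `d ≥ 0`, the orthant `u ≥ 0` is invariant as time runs backwards: at the last time a
component of `u + ε e^{(K+1)(b-t)}` touches `0`, the Metzler structure makes that component
strictly decreasing, although it is positive just after. This gives `q ≥ 0`, and applied to
`‖z‖ - q`, whose forcing term `-‖z‖ Bᵀ 1` is nonnegative because the column sums of `B` are
`≤ 0`, it gives `q ≤ ‖z‖`.
-/

open Matrix Set Filter Topology

lemma HasDerivAt.nonneg_of_isLocalMinOn_Ici {f : ℝ → ℝ} {f' a : ℝ} (hf : HasDerivAt f f' a)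
    (hmin : IsLocalMinOn f (Ici a) a) : 0 ≤ f' := by
  have hcone : (1 : ℝ) ∈ posTangentConeAt (Ici a) a :=
    one_mem_posTangentConeAt_iff_frequently.2
      (eventually_nhdsWithin_of_forall (s := Ioi a) fun _ hx => mem_Ici.2 (le_of_lt hx)).frequently
  simpa using hmin.hasFDerivWithinAt_nonneg hf.hasFDerivAt.hasFDerivWithinAt hcone

theorem pos_of_pos_right_of_deriv_neg_at_zero {ι : Type*} [Finite ι] {g g' : ℝ → ι → ℝ}
    {a b : ℝ} (hg : ∀ i, ∀ s ∈ Icc a b, HasDerivAt (fun t => g t i) (g' s i) s)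
    (hb : ∀ i, 0 < g b i) (hzero : ∀ s ∈ Ico a b, ∀ i, 0 ≤ g s → g s i = 0 → g' s i < 0) :
    ∀ s ∈ Icc a b, ∀ i, 0 < g s i := by
  by_contra! hbad
  obtain ⟨s₁, hs₁, i₁, hi₁⟩ := hbad
  set A := ⋃ i, Icc a b ∩ (fun s => g s i) ⁻¹' Iic 0
  have hA : IsClosed A := isClosed_iUnion_of_finite fun i =>
    ContinuousOn.preimage_isClosed_of_isClosed
      (fun s hs => (hg i s hs).continuousAt.continuousWithinAt) isClosed_Icc isClosed_Iic
  have hAbdd : BddAbove A := ⟨b, fun s hs => by obtain ⟨_, hs, -⟩ := mem_iUnion.1 hs; exact hs.2⟩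
  obtain ⟨i₀, hs₀, hi₀⟩ := mem_iUnion.1 (hA.csSup_mem ⟨s₁, mem_iUnion.2 ⟨i₁, hs₁, hi₁⟩⟩ hAbdd)
  set s₀ := sSup A
  have hs₀b : s₀ < b := lt_of_le_of_ne hs₀.2 fun h => (hb i₀).not_ge (h ▸ hi₀)
  have hpos_after : ∀ s ∈ Ioc s₀ b, ∀ i, 0 < g s i := fun s hs i => by
    by_contra! h
    exact hs.1.not_ge (le_csSup hAbdd (mem_iUnion.2 ⟨i, ⟨hs₀.1.trans hs.1.le, hs.2⟩, h⟩))
  have hnonneg : 0 ≤ g s₀ := fun j => by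
    refine ge_of_tendsto (x := 𝓝[>] s₀)
      ((hg j s₀ hs₀).continuousAt.tendsto.mono_left nhdsWithin_le_nhds) ?_
    filter_upwards [Ioo_mem_nhdsGT hs₀b] with s hs using (hpos_after s ⟨hs.1, hs.2.le⟩ j).le
  have hvanish : g s₀ i₀ = 0 := le_antisymm hi₀ (hnonneg i₀)
  have hmin : IsLocalMinOn (fun s => g s i₀) (Ici s₀) s₀ := by
    filter_upwards [Ico_mem_nhdsGE hs₀b] with s hs
    rw [hvanish]
    exact hs.1.eq_or_lt.elim (fun h => h ▸ hnonneg i₀) fun h => (hpos_after s ⟨h, hs.2.le⟩ i₀).le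
  exact (hzero s₀ ⟨hs₀.1, hs₀b⟩ i₀ hnonneg hvanish).not_ge
    ((hg i₀ s₀ hs₀).nonneg_of_isLocalMinOn_Ici hmin)

lemma mul_sum_le_mulVec_apply_of_offDiag_nonneg {ι : Type*} [Fintype ι] {M : Matrix ι ι ℝ}
    {v : ι → ℝ} {c : ℝ} {i : ι} (hM : ∀ j, j ≠ i → 0 ≤ M i j) (hv : ∀ j, c ≤ v j)
    (hvi : v i = c) : c * ∑ j, M i j ≤ (M *ᵥ v) i := by
  have hdiff : (M *ᵥ v) i - c * ∑ j, M i j = ∑ j, M i j * (v j - c) := by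
    simp only [mulVec, dotProduct, Finset.mul_sum, ← Finset.sum_sub_distrib, mul_sub, mul_comm]
  rw [← sub_nonneg, hdiff]
  refine Finset.sum_nonneg fun j _ => ?_
  rcases eq_or_ne j i with rfl | hj
  · simp [hvi]
  · exact mul_nonneg (hM j hj) (sub_nonneg.2 (hv j))

section BackwardMetzler

variable {ι : Type*} [Fintype ι] {M : ℝ → Matrix ι ι ℝ} {u : ℝ → ι → ℝ} {a b : ℝ}

theorem nonneg_of_hasDerivAt_neg_mulVec_add {d : ℝ → ι → ℝ} {K : ℝ}
    (hM : ∀ s ∈ Icc a b, ∀ i j, j ≠ i → 0 ≤ M s i j)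
    (hrow : ∀ s ∈ Icc a b, ∀ i, ∑ j, M s i j ≤ K) (hd : ∀ s ∈ Icc a b, 0 ≤ d s)
    (hu : ∀ s ∈ Icc a b, HasDerivAt u (-(M s *ᵥ u s + d s)) s) (hb : 0 ≤ u b) :
    ∀ s ∈ Icc a b, 0 ≤ u s := by
  set e : ℝ → ℝ := fun t => Real.exp ((K + 1) * (b - t))
  have he : ∀ t, HasDerivAt e (-(K + 1) * e t) t := fun t =>
    (((hasDerivAt_id t).const_sub b).const_mul (K + 1)).exp.congr_deriv
      (by simp only [e, id]; ring)
  have hperturbed : ∀ ε > 0, ∀ s ∈ Icc a b, ∀ i, 0 < u s i + ε * e s := by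
    intro ε hε
    refine pos_of_pos_right_of_deriv_neg_at_zero
      (g' := fun s i => -(M s *ᵥ u s + d s) i + ε * (-(K + 1) * e s))
      (fun i s hs => (hasDerivAt_pi.1 (hu s hs) i).add ((he s).const_mul ε))
      (fun i => add_pos_of_nonneg_of_pos (hb i) (mul_pos hε (Real.exp_pos _))) ?_
    intro s hs i hnonneg hvanish
    have hs' : s ∈ Icc a b := Ico_subset_Icc_self hs
    have hεe : 0 < ε * e s := mul_pos hε (Real.exp_pos _)
    have hlow : ∀ j, -(ε * e s) ≤ u s j := fun j => by
      linarith [show 0 ≤ u s j + ε * e s from hnonneg j]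
    have hMu : -(ε * e s) * ∑ j, M s i j ≤ (M s *ᵥ u s) i :=
      mul_sum_le_mulVec_apply_of_offDiag_nonneg (hM s hs' i) hlow (by linarith)
    have hK : -(ε * e s) * K ≤ -(ε * e s) * ∑ j, M s i j :=
      mul_le_mul_of_nonpos_left (hrow s hs' i) (by linarith)
    have hdi : 0 ≤ d s i := hd s hs' i
    simp only [Pi.add_apply]
    linarith
  intro s hs i
  refine le_of_forall_pos_lt_add fun δ hδ => ?_
  have hes : 0 < e s := Real.exp_pos _
  simpa [div_mul_cancel₀ δ hes.ne'] using hperturbed (δ / e s) (div_pos hδ hes) s hs i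

theorem le_const_of_hasDerivAt_neg_mulVec {c : ℝ}
    (hM : ∀ s ∈ Icc a b, ∀ i j, j ≠ i → 0 ≤ M s i j)
    (hrow : ∀ s ∈ Icc a b, ∀ i, ∑ j, M s i j ≤ 0)
    (hu : ∀ s ∈ Icc a b, HasDerivAt u (-(M s *ᵥ u s)) s) (hc : 0 ≤ c) (hb : ∀ i, u b i ≤ c) :
    ∀ s ∈ Icc a b, ∀ i, u s i ≤ c := by
  have hgap := nonneg_of_hasDerivAt_neg_mulVec_add (u := fun s => Function.const ι c - u s)
    (d := fun s => -(M s *ᵥ Function.const ι c)) hM hrow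
    (fun s hs i => by
      simpa [mulVec, dotProduct, ← Finset.sum_mul] using
        mul_nonpos_of_nonpos_of_nonneg (hrow s hs i) hc)
    (fun s hs => by
      refine ((hasDerivAt_const s (Function.const ι c)).sub (hu s hs)).congr_deriv ?_
      rw [mulVec_sub]
      abel)
    (fun i => sub_nonneg.2 (hb i))
  exact fun s hs i => sub_nonneg.1 (hgap s hs i)

end BackwardMetzler

theorem adjoint_truncated_nonneg_and_bounded_general {N : ℕ} (T : ℝ)
    (B : ℝ → Matrix (Fin N) (Fin N) ℝ)
    (hSubMarkov : ∀ t ∈ Set.Icc (0:ℝ) T,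
      (∀ i j, i ≠ j → 0 ≤ B t i j) ∧ (∀ j, ∑ i, B t i j ≤ 0))
    (q : ℝ → (Fin N → ℝ)) (z : Fin N → ℝ) (hz : ∀ i, 0 ≤ z i)
    (hq : ∀ t ∈ Set.Icc (0:ℝ) T, HasDerivAt q (-((B t)ᵀ *ᵥ (q t))) t)
    (hqT : q T = z) :
    ∀ t ∈ Set.Icc (0:ℝ) T, (∀ i, 0 ≤ q t i) ∧ ‖q t‖ ≤ ‖z‖ := by
  have hMetzler : ∀ t ∈ Icc (0:ℝ) T, ∀ i j, j ≠ i → 0 ≤ (B t)ᵀ i j :=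
    fun t ht i j hji => (hSubMarkov t ht).1 j i hji
  have hrow : ∀ t ∈ Icc (0:ℝ) T, ∀ i, ∑ j, (B t)ᵀ i j ≤ 0 := fun t ht => (hSubMarkov t ht).2
  have hnonneg := nonneg_of_hasDerivAt_neg_mulVec_add (d := 0) hMetzler hrow
    (fun _ _ => le_rfl) (by simpa using hq) (by rw [hqT]; exact hz)
  have hle := le_const_of_hasDerivAt_neg_mulVec hMetzler hrow hq (norm_nonneg z)
    (fun i => hqT ▸ (le_abs_self (z i)).trans (norm_le_pi_norm z i))
  intro t ht
  refine ⟨hnonneg t ht, (pi_norm_le_iff_of_nonneg (norm_nonneg z)).2 fun i => ?_⟩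
  rw [Real.norm_eq_abs, abs_of_nonneg (hnonneg t ht i)]
  exact hle t ht i

/-- For the adjoint equation of a truncated (sub-Markovian) generator — nonnegative
off-diagonal entries and column sums `≤ 0` — with nonnegative terminal data `z`,
the solution stays componentwise nonnegative and its sup norm is bounded by `‖z‖_∞`.
Here `‖·‖` on `Fin N → ℝ` is the sup (max-absolute-entry) norm. -/
theorem adjoint_truncated_nonneg_and_bounded {N : ℕ} (T : ℝ) (hT : 0 < T)
    (B : ℝ → Matrix (Fin N) (Fin N) ℝ) (hB : ContinuousOn B (Set.Icc 0 T))
    (hSubMarkov : ∀ t ∈ Set.Icc (0:ℝ) T,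
      (∀ i j, i ≠ j → 0 ≤ B t i j) ∧ (∀ j, ∑ i, B t i j ≤ 0))
    (q : ℝ → (Fin N → ℝ)) (z : Fin N → ℝ) (hz : ∀ i, 0 ≤ z i)
    (hq : ∀ t ∈ Set.Icc (0:ℝ) T, HasDerivAt q (-((B t)ᵀ *ᵥ (q t))) t)
    (hqT : q T = z) :
    ∀ t ∈ Set.Icc (0:ℝ) T, (∀ i, 0 ≤ q t i) ∧ ‖q t‖ ≤ ‖z‖ :=
  adjoint_truncated_nonneg_and_bounded_general T B hSubMarkov q z hz hq hqT
end

section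
/- Let A ∈ ℝ^{N×N} be a Markov generator (nonnegative off-diagonal entries, every column summing to zero). Let the index set {1,…,N} be partitioned into a retained set I₁ and a discarded set I₂, and let A_T ∈ ℝ^{N×N} be the truncation of A given by (A_T)_{ij} = A_{ij} if i,j ∈ I₁ and (A_T)_{ij} = 0 otherwise. Let p₀ ∈ ℝ^N be componentwise nonnegative and supported on I₁ (p₀,ᵢ = 0 for i ∈ I₂). Then for every t ≥ 0 the Finite State Projection solution is a componentwise lower bound for the exact solution: exp(t A_T) p₀ ≤ exp(t A) p₀ componentwise. -/
/-!
If `M` has nonnegative off-diagonal entries, then `M + c • 1` is entrywise nonnegative for large `c`,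
and the shift only rescales the exponential: `exp (t • (M + c • 1)) = Real.exp (t * c) • exp (t • M)`.
For entrywise nonnegative matrices the exponential series is monotone in the matrix, so
`exp (t • M) *ᵥ p ≤ exp (t • M') *ᵥ p` for `p ≥ 0`, `t ≥ 0` and `M ≤ M'` entrywise.

`A_T` itself is not entrywise below `A`: its diagonal vanishes on `I₂`, where that of `A` is
nonpositive. But `A_T + D`, with `D` the diagonal of `A` on `I₂`, is; and since `D` commutes with `A_T`
and vanishes on the support of `p₀`, `exp (t • (A_T + D)) *ᵥ p₀ = exp (t • A_T) *ᵥ p₀`.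
-/

open Matrix NormedSpace

namespace Matrix

variable {n : Type*} [Fintype n]

theorem mulVec_nonneg {B : Matrix n n ℝ} (hB : ∀ i j, 0 ≤ B i j) {p : n → ℝ} (hp : 0 ≤ p) :
    0 ≤ B *ᵥ p :=
  fun i => Finset.sum_nonneg fun j _ => mul_nonneg (hB i j) (hp j)

theorem mulVec_le_mulVec_of_nonneg {B B' : Matrix n n ℝ} (hB' : ∀ i j, 0 ≤ B' i j)
    (hle : ∀ i j, B' i j ≤ B i j) {p q : n → ℝ} (hp : 0 ≤ p) (hpq : p ≤ q) :
    B' *ᵥ p ≤ B *ᵥ q :=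
  fun i => Finset.sum_le_sum fun j _ =>
    mul_le_mul (hle i j) (hpq j) (hp j) ((hB' i j).trans (hle i j))

variable [DecidableEq n]

theorem pow_mulVec_nonneg {B : Matrix n n ℝ} (hB : ∀ i j, 0 ≤ B i j) {p : n → ℝ} (hp : 0 ≤ p)
    (k : ℕ) : 0 ≤ B ^ k *ᵥ p := by
  induction k with
  | zero => simpa using hp
  | succ k ih => simpa [pow_succ', ← mulVec_mulVec] using mulVec_nonneg hB ih

theorem pow_mulVec_le_pow_mulVec {B B' : Matrix n n ℝ} (hB' : ∀ i j, 0 ≤ B' i j)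
    (hle : ∀ i j, B' i j ≤ B i j) {p : n → ℝ} (hp : 0 ≤ p) (k : ℕ) :
    B' ^ k *ᵥ p ≤ B ^ k *ᵥ p := by
  induction k with
  | zero => rfl
  | succ k ih =>
    simpa [pow_succ', ← mulVec_mulVec] using
      mulVec_le_mulVec_of_nonneg hB' hle (pow_mulVec_nonneg hB' hp k) ih

theorem hasSum_exp_mulVec_apply (M : Matrix n n ℝ) (p : n → ℝ) (i : n) :
    HasSum (fun k : ℕ => (k.factorial : ℝ)⁻¹ * (M ^ k *ᵥ p) i) ((exp M *ᵥ p) i) := by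
  let _ : SeminormedRing (Matrix n n ℝ) := Matrix.linftyOpSemiNormedRing
  let _ : NormedRing (Matrix n n ℝ) := Matrix.linftyOpNormedRing
  let _ : NormedAlgebra ℝ (Matrix n n ℝ) := Matrix.linftyOpNormedAlgebra
  let entry : Matrix n n ℝ →+ ℝ := (Pi.evalAddMonoidHom _ i).comp (mulVec.addMonoidHomLeft p)
  have hentry : Continuous entry := by
    change Continuous fun X : Matrix n n ℝ => (X *ᵥ p) i
    fun_prop
  convert (exp_series_hasSum_exp' (𝕂 := ℝ) M).map entry hentry using 1
  · ext k
    simp [entry, mulVec.addMonoidHomLeft, smul_mulVec]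
  · rfl

theorem exp_mulVec_le_exp_mulVec {B B' : Matrix n n ℝ} (hB' : ∀ i j, 0 ≤ B' i j)
    (hle : ∀ i j, B' i j ≤ B i j) {p : n → ℝ} (hp : 0 ≤ p) : exp B' *ᵥ p ≤ exp B *ᵥ p :=
  fun i => hasSum_le
    (fun k => mul_le_mul_of_nonneg_left (pow_mulVec_le_pow_mulVec hB' hle hp k i) (by positivity))
    (hasSum_exp_mulVec_apply B' p i) (hasSum_exp_mulVec_apply B p i)

theorem exp_add_diagonal_mulVec (X : Matrix n n ℝ) (d p : n → ℝ) (h : Commute X (diagonal d)) :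
    exp (X + diagonal d) *ᵥ p = exp X *ᵥ fun i => Real.exp (d i) * p i := by
  rw [exp_add_of_commute X _ h, ← mulVec_mulVec, exp_diagonal]
  congr 1
  ext i
  rw [mulVec_diagonal, Pi.exp_def, Real.exp_eq_exp_ℝ]

theorem exp_add_smul_one_mulVec (X : Matrix n n ℝ) (c : ℝ) (p : n → ℝ) :
    exp (X + c • 1) *ᵥ p = Real.exp c • (exp X *ᵥ p) := by
  have hc : Commute X (diagonal fun _ => c) := (scalar_commute c (.all c) X).symm
  rw [smul_one_eq_diagonal, exp_add_diagonal_mulVec X _ p hc, ← mulVec_smul]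
  rfl

theorem commute_diagonal_of_apply_ne_zero {X : Matrix n n ℝ} {d : n → ℝ}
    (h : ∀ i j, X i j ≠ 0 → d i = d j) : Commute X (diagonal d) := by
  ext i j
  rw [mul_diagonal, diagonal_mul]
  by_cases hij : X i j = 0
  · simp [hij]
  · rw [h i j hij, mul_comm]

theorem exp_smul_mulVec_le_of_offDiag_nonneg {M M' : Matrix n n ℝ}
    (hM : ∀ i j, i ≠ j → 0 ≤ M i j) (hle : ∀ i j, M i j ≤ M' i j) {t : ℝ} (ht : 0 ≤ t)
    {p : n → ℝ} (hp : 0 ≤ p) : exp (t • M) *ᵥ p ≤ exp (t • M') *ᵥ p := by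
  obtain ⟨c, hc⟩ := (Set.finite_range fun i => -M i i).bddAbove
  have hshift (X : Matrix n n ℝ) : t • (X + c • 1) = t • X + (t * c) • 1 := by
    rw [smul_add, smul_smul]
  have hnonneg : ∀ i j, 0 ≤ (t • (M + c • 1)) i j := by
    intro i j
    rcases eq_or_ne i j with rfl | hij
    · simpa using mul_nonneg ht (by linarith [hc ⟨i, rfl⟩] : 0 ≤ M i i + c)
    · simpa [one_apply_ne hij] using mul_nonneg ht (hM i j hij)
  have hmono : ∀ i j, (t • (M + c • 1)) i j ≤ (t • (M' + c • 1)) i j := fun i j => by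
    simp only [smul_apply, add_apply, smul_eq_mul]
    gcongr
    exact hle i j
  have key := exp_mulVec_le_exp_mulVec hnonneg hmono hp
  rw [hshift, hshift, exp_add_smul_one_mulVec, exp_add_smul_one_mulVec] at key
  exact (smul_le_smul_iff_of_pos_left (Real.exp_pos _)).mp key

end Matrix

section Truncation

variable {n : Type*} [DecidableEq n] {A AT : Matrix n n ℝ} {I₁ : Finset n}

theorem truncation_apply_ne_zero (hAT : ∀ i j, AT i j = if i ∈ I₁ ∧ j ∈ I₁ then A i j else 0)
    {i j : n} (hij : AT i j ≠ 0) : i ∈ I₁ ∧ j ∈ I₁ := by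
  by_contra h
  simp [hAT, h] at hij

theorem truncation_add_diagonal_apply_le
    (hAT : ∀ i j, AT i j = if i ∈ I₁ ∧ j ∈ I₁ then A i j else 0)
    (hoff : ∀ i j, i ≠ j → 0 ≤ A i j) (i j : n) :
    (AT + diagonal fun k => if k ∈ I₁ then 0 else A k k) i j ≤ A i j := by
  rcases eq_or_ne i j with rfl | hij
  · by_cases hi : i ∈ I₁ <;> simp [hAT, hi]
  · by_cases h : i ∈ I₁ ∧ j ∈ I₁ <;> simp [hAT, h, hij, hoff i j hij]

end Truncation

theorem fsp_lower_bound_general {N : ℕ} (A : Matrix (Fin N) (Fin N) ℝ)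
    (hoff : ∀ i j, i ≠ j → 0 ≤ A i j)
    (I₁ : Finset (Fin N)) (AT : Matrix (Fin N) (Fin N) ℝ)
    (hAT : ∀ i j, AT i j = if i ∈ I₁ ∧ j ∈ I₁ then A i j else 0)
    (p₀ : Fin N → ℝ) (hp₀ : ∀ i, 0 ≤ p₀ i)
    (hsupp : ∀ i ∉ I₁, p₀ i = 0) :
    ∀ t : ℝ, 0 ≤ t → ∀ i, ((exp (t • AT)) *ᵥ p₀) i ≤ ((exp (t • A)) *ᵥ p₀) i := by
  intro t ht
  set d : Fin N → ℝ := fun k => if k ∈ I₁ then 0 else A k k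
  have hcomm : Commute (t • AT) (diagonal (t • d)) :=
    commute_diagonal_of_apply_ne_zero fun i j hij => by
      obtain ⟨hi, hj⟩ := truncation_apply_ne_zero hAT (right_ne_zero_of_mul (a := t) hij)
      simp [d, hi, hj]
  have hfix : (fun i => Real.exp ((t • d) i) * p₀ i) = p₀ := funext fun i => by
    by_cases hi : i ∈ I₁ <;> simp [d, hi, hsupp]
  have hmetzler : ∀ i j, i ≠ j → 0 ≤ (AT + diagonal d) i j := fun i j hij => by
    by_cases h : i ∈ I₁ ∧ j ∈ I₁ <;> simp [hAT, h, hij, hoff i j hij]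
  calc exp (t • AT) *ᵥ p₀ = exp (t • (AT + diagonal d)) *ᵥ p₀ := by
        rw [smul_add, ← diagonal_smul, exp_add_diagonal_mulVec _ _ _ hcomm, hfix]
    _ ≤ exp (t • A) *ᵥ p₀ := exp_smul_mulVec_le_of_offDiag_nonneg hmetzler
        (truncation_add_diagonal_apply_le hAT hoff) ht hp₀

/-- The Finite State Projection solution is a componentwise lower bound for the exact
master-equation solution: for a Markov generator `A` (nonnegative off-diagonals, zero
column sums), a retained index set `I₁` (with discarded complement), and the truncation
`A_T` keeping only rows and columns in `I₁`, and a nonnegative initial vector supported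
on `I₁`, `exp(t A_T) p₀ ≤ exp(t A) p₀` componentwise for all `t ≥ 0`. -/
theorem fsp_lower_bound {N : ℕ} (A : Matrix (Fin N) (Fin N) ℝ)
    (hoff : ∀ i j, i ≠ j → 0 ≤ A i j) (hcol : ∀ j, ∑ i, A i j = 0)
    (I₁ : Finset (Fin N)) (AT : Matrix (Fin N) (Fin N) ℝ)
    (hAT : ∀ i j, AT i j = if i ∈ I₁ ∧ j ∈ I₁ then A i j else 0)
    (p₀ : Fin N → ℝ) (hp₀ : ∀ i, 0 ≤ p₀ i)
    (hsupp : ∀ i ∉ I₁, p₀ i = 0) :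
    ∀ t : ℝ, 0 ≤ t → ∀ i, ((exp (t • AT)) *ᵥ p₀) i ≤ ((exp (t • A)) *ᵥ p₀) i :=
  fsp_lower_bound_general A hoff I₁ AT hAT p₀ hp₀ hsupp
end
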